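/- There is a constant C > 0 such that for all t ≥ 1 and all k > 0, |v(t,k)| ≤ C·t^{3/2}·ω(k)^{−1/2}, where ω(k) = √(1+k²). -/

import Mathlib

open Complex MeasureTheory Filter
open scoped RealInnerProductSpace

noncomputable section

/-- Three-dimensional Euclidean space. -/
abbrev V3 : Type := EuclideanSpace ℝ (Fin 3)

/-- The Bessel function of complex order `α`:
`J_α(x) = Σ_{n=0}^∞ ((−1)^n/(n!·Γ(α+n+1)))·exp((α+2n)·log(x/2))`. -/
def besselJ (α : ℂ) (x : ℝ) : ℂ :=
  ∑' n : ℕ, ((-1 : ℂ) ^ n / ((n.factorial : ℂ) * Complex.Gamma (α + (n : ℂ) + 1))) *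
    Complex.exp ((α + 2 * (n : ℂ)) * (Real.log (x / 2) : ℂ))

/-- The Hankel function of the first kind. -/
def hankel1 (α : ℂ) (x : ℝ) : ℂ :=
  (besselJ (-α) x - Complex.exp (-(Complex.I * (Real.pi : ℂ) * α)) * besselJ α x) /
    (Complex.I * Complex.sin (α * (Real.pi : ℂ)))

/-- The Hankel function of the second kind. -/
def hankel2 (α : ℂ) (x : ℝ) : ℂ :=
  (Complex.exp (Complex.I * (Real.pi : ℂ) * α) * besselJ α x - besselJ (-α) x) /
    (Complex.I * Complex.sin (α * (Real.pi : ℂ)))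

/-- `μ = √((mR)² − 9/4)`. -/
def modeMu (m R : ℝ) : ℝ := Real.sqrt ((m * R) ^ 2 - 9 / 4)

/-- `ν = iμ`. -/
def modeNu (m R : ℝ) : ℂ := Complex.I * (modeMu m R : ℂ)

/-- The mode function `v(t,k) = e^{−μπ/2}·t^{3/2}·H^{(1)}_ν(kt)`. -/
def modeV (m R t k : ℝ) : ℂ :=
  (Real.exp (-(modeMu m R * Real.pi / 2)) : ℂ) * ((t ^ ((3 : ℝ) / 2) : ℝ) : ℂ) *
    hankel1 (modeNu m R) (k * t)

/-- `v′(t,k) = ∂v/∂t (t,k)`. -/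
def modeV' (m R t k : ℝ) : ℂ := deriv (fun s => modeV m R s k) t

/-- `ω(k) = √(1+k²)`. -/
def omegaK (k : ℝ) : ℝ := Real.sqrt (1 + k ^ 2)

/-- The Fourier transform on `ℝ³`. -/
def ft (g : V3 → ℂ) (k : V3) : ℂ :=
  (((2 * Real.pi) ^ (-(3 : ℝ) / 2) : ℝ) : ℂ) *
    ∫ x : V3, Complex.exp (-(Complex.I) * (⟪k, x⟫ : ℂ)) * g x

/-- The inverse Fourier transform on `ℝ³`. -/
def ift (g : V3 → ℂ) (x : V3) : ℂ :=
  (((2 * Real.pi) ^ (-(3 : ℝ) / 2) : ℝ) : ℂ) *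
    ∫ k : V3, Complex.exp (Complex.I * (⟪k, x⟫ : ℂ)) * g k

/-- The map `K_t` on the Fourier side, applied to the Fourier transforms `f̃, h̃`
of the Cauchy data:
`K_t(f,h)(k) = (πi/(4t³))·[t·f̃(k)·conj(v′(t,|k|)) − R·h̃(k)·conj(v(t,|k|))]`. -/
def ktAux (m R t : ℝ) (ftil htil : V3 → ℂ) (k : V3) : ℂ :=
  ((Real.pi : ℂ) * Complex.I / (4 * (t : ℂ) ^ 3)) *
    ((t : ℂ) * ftil k * (starRingEnd ℂ) (modeV' m R t ‖k‖) -
      (R : ℂ) * htil k * (starRingEnd ℂ) (modeV m R t ‖k‖))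

/-- `K_t` applied to real Cauchy data `(f,h)`. -/
def ktFun (m R t : ℝ) (f h : V3 → ℝ) : V3 → ℂ :=
  ktAux m R t (ft fun x => (f x : ℂ)) (ft fun x => (h x : ℂ))

/-- The Fourier transform of the first component of the pair `L_tψ`:
`f̃_t(k) = v(t,|k|)·ψ(k) + conj(v(t,|k|))·conj(ψ(−k))`. -/
def ltF (m R t : ℝ) (ψ : V3 → ℂ) (k : V3) : ℂ :=
  modeV m R t ‖k‖ * ψ k + (starRingEnd ℂ) (modeV m R t ‖k‖) * (starRingEnd ℂ) (ψ (-k))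

/-- The Fourier transform of the second component of the pair `L_tψ`:
`h̃_t(k) = (t/R)·[v′(t,|k|)·ψ(k) + conj(v′(t,|k|))·conj(ψ(−k))]`. -/
def ltH (m R t : ℝ) (ψ : V3 → ℂ) (k : V3) : ℂ :=
  ((t / R : ℝ) : ℂ) *
    (modeV' m R t ‖k‖ * ψ k + (starRingEnd ℂ) (modeV' m R t ‖k‖) * (starRingEnd ℂ) (ψ (-k)))

/-- The solution `u(t,x⃗)` built from the coefficient function `ψ`:
`u(t,x⃗) = (2π)^{−3/2}·∫ e^{ik⃗·x⃗}·[v(t,|k⃗|)·ψ(k⃗) + conj(v(t,|k⃗|))·conj(ψ(−k⃗))] dk⃗`. -/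
def uSol (m R : ℝ) (ψ : V3 → ℂ) (t : ℝ) (x : V3) : ℂ :=
  (((2 * Real.pi) ^ (-(3 : ℝ) / 2) : ℝ) : ℂ) *
    ∫ k : V3, Complex.exp (Complex.I * (⟪k, x⟫ : ℂ)) *
      (modeV m R t ‖k‖ * ψ k + (starRingEnd ℂ) (modeV m R t ‖k‖) * (starRingEnd ℂ) (ψ (-k)))

/-- The spatial Laplacian, as the sum of the second partial derivatives along
the coordinate directions. -/
def lap3 (w : V3 → ℂ) (x : V3) : ℂ :=
  ∑ i : Fin 3, iteratedDeriv 2 (fun s : ℝ => w (x + s • EuclideanSpace.single i (1 : ℝ))) 0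

/-- The square of the Sobolev-type norm `‖(f,h)‖_{1/2}`, expressed in terms of the
Fourier transforms `f̃, h̃` of the data:
`‖(f,h)‖_{1/2}² = ∫ ω(|k⃗|)·|f̃(k⃗)|² dk⃗ + ∫ ω(|k⃗|)⁻¹·|h̃(k⃗)|² dk⃗`. -/
def halfNormSq (ftil htil : V3 → ℂ) : ℝ :=
  (∫ k : V3, omegaK ‖k‖ * ‖ftil k‖ ^ 2) + ∫ k : V3, (omegaK ‖k‖)⁻¹ * ‖htil k‖ ^ 2

/-- The Sobolev-type norm `‖(f,h)‖_{1/2}` (arguments are the Fourier transforms). -/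
def halfNorm (ftil htil : V3 → ℂ) : ℝ := Real.sqrt (halfNormSq ftil htil)

/-- The `L²(ℝ³)` norm. -/
def l2Norm (g : V3 → ℂ) : ℝ := Real.sqrt (∫ k : V3, ‖g k‖ ^ 2)

/-- The transformed potential operator `V̂` with (Fourier-transformed) potential `W`:
`(V̂ψ)(k⃗) = −(2π)^{3/2}·R·(πi/4)·conj(v(1,|k⃗|))·(W ∗ g_ψ)(k⃗)` where
`g_ψ(k⃗) = v(1,|k⃗|)·ψ(k⃗) + conj(v(1,|k⃗|))·conj(ψ(−k⃗))`. -/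
def vHatOp (m R : ℝ) (W : V3 → ℂ) (ψ : V3 → ℂ) (k : V3) : ℂ :=
  ((-((2 * Real.pi) ^ ((3 : ℝ) / 2)) * R : ℝ) : ℂ) * ((Real.pi : ℂ) * Complex.I / 4) *
    (starRingEnd ℂ) (modeV m R 1 ‖k‖) * ∫ y : V3, W y * ltF m R 1 ψ (k - y)

/-- The free transformed evolution `Û₀(a,b) = K₁ ∘ L_a ∘ K_b ∘ L₁` on `L²(ℝ³)`. -/
def u0Hat (m R a b : ℝ) (ψ : V3 → ℂ) : V3 → ℂ :=
  ktAux m R 1 (ltF m R a (ktAux m R b (ltF m R 1 ψ) (ltH m R 1 ψ)))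
    (ltH m R a (ktAux m R b (ltF m R 1 ψ) (ltH m R 1 ψ)))

/-- The inner chain `V̂(s)·V̂(s₂)···V̂(s_{j+1})·Û₀(s_{j+1},1)ψ` of the `n`-th Dyson term,
with the nested integrals `∫₁^{s}···` built in; `W s` is the spatial Fourier transform
of the potential at time `s`. -/
def dysonM (m R : ℝ) (W : ℝ → V3 → ℂ) : ℕ → ℝ → (V3 → ℂ) → V3 → ℂ
  | 0, s, ψ => vHatOp m R (W s) (u0Hat m R s 1 ψ)
  | j + 1, s, ψ => vHatOp m R (W s) fun k => ∫ r in Set.Ioc (1 : ℝ) s, dysonM m R W j r ψ k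

/-- The `n`-th Dyson term
`∫₁^t∫₁^{s₁}···∫₁^{s_{n−1}} Û₀(t,s₁)·V̂(s₁)···V̂(s_n)·Û₀(s_n,1)ψ ds_n···ds₁` (for `n ≥ 1`). -/
def dysonT (m R : ℝ) (W : ℝ → V3 → ℂ) (n : ℕ) (t : ℝ) (ψ : V3 → ℂ) : V3 → ℂ := fun k =>
  ∫ s in Set.Ioc (1 : ℝ) t, u0Hat m R t s (dysonM m R W (n - 1) s ψ) k

/-!
Write `H^{(1)}_{iμ} = a J_{iμ} + b J_{-iμ}`. Near `0` both Bessel series are bounded, because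
`|(x/2)^{±iμ}| = 1`. For large `x`, `W(x) = √(x/2) H^{(1)}_{iμ}(x)` solves
`W'' = -(1 + (μ² + 1/4)/x²) W`, so the energy `|W|² + |W'|²` grows at relative rate at most
`(μ² + 1/4)/x²`, which is integrable on `[1, ∞)`; hence `W` is bounded and
`|H^{(1)}_{iμ}(x)| = O(x^{-1/2})`. Together `|H^{(1)}_{iμ}(x)| ≤ C (1 + x)^{-1/2}`, and
`ω(k) ≤ 1 + kt` for `t ≥ 1`.
-/

open scoped Nat

def besselCoeff (α : ℂ) (n : ℕ) : ℂ := (-1) ^ n / (n ! * Gamma (α + n + 1))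

def besselTerm (α : ℂ) (j n : ℕ) (z : ℂ) : ℂ :=
  besselCoeff α n * (α + 2 * n) ^ j * exp ((α + 2 * n) * z)

/-- `besselSeries α j` is the `j`-th derivative of `z ↦ J_α (2 * exp z)`. -/
def besselSeries (α : ℂ) (j : ℕ) (z : ℂ) : ℂ := ∑' n, besselTerm α j n z

section BesselSeries

variable {α : ℂ}

theorem besselJ_eq_besselSeries (α : ℂ) (x : ℝ) :
    besselJ α x = besselSeries α 0 (Real.log (x / 2)) := by
  simp [besselJ, besselSeries, besselTerm, besselCoeff]

theorem factorial_mul_norm_Gamma_le (hα : 0 ≤ α.re) (n : ℕ) :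
    n ! * ‖Gamma (α + 1)‖ ≤ ‖Gamma (α + n + 1)‖ := by
  induction n with
  | zero => simp
  | succ n ih =>
    have hre : (n + 1 : ℝ) ≤ (α + n + 1).re := by simp; linarith
    have hne : α + n + 1 ≠ 0 := fun h => by simp [h] at hre; linarith
    have hnorm : (n + 1 : ℝ) ≤ ‖α + n + 1‖ := hre.trans (re_le_norm _)
    rw [Nat.cast_succ, ← add_assoc, Gamma_add_one _ hne, norm_mul, Nat.factorial_succ,
      Nat.cast_mul, Nat.cast_succ, mul_assoc]
    gcongr

theorem norm_besselCoeff_le (hα : 0 ≤ α.re) (n : ℕ) :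
    ‖besselCoeff α n‖ ≤ ‖Gamma (α + 1)‖⁻¹ / n ! := by
  have hΓ : 0 < ‖Gamma (α + 1)‖ := norm_pos_iff.mpr (Gamma_ne_zero_of_re_pos (by simp; linarith))
  have hle : ‖Gamma (α + 1)‖ ≤ ‖Gamma (α + n + 1)‖ :=
    (le_mul_of_one_le_left hΓ.le (by exact_mod_cast n.factorial_pos)).trans
      (factorial_mul_norm_Gamma_le hα n)
  rw [besselCoeff, norm_div, norm_mul, norm_pow, norm_neg, norm_one, one_pow, norm_natCast,
    one_div, mul_inv, div_eq_mul_inv, mul_comm (‖Gamma (α + 1)‖⁻¹)]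
  gcongr

theorem norm_besselTerm_le (hα : 0 ≤ α.re) (j n : ℕ) {z : ℂ} {M : ℝ} (hz : ‖z‖ ≤ M) :
    ‖besselTerm α j n z‖ ≤
      ‖Gamma (α + 1)‖⁻¹ * j ! * Real.exp (‖α‖ * (M + 1)) * (Real.exp (2 * (M + 1)) ^ n / n !) := by
  set w : ℂ := α + 2 * n
  have hw : ‖w‖ ≤ ‖α‖ + 2 * n := (norm_add_le _ _).trans (by simp)
  have hpow : ‖w ^ j‖ ≤ j ! * Real.exp ‖w‖ := by
    rw [norm_pow, ← div_le_iff₀' (by positivity)]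
    exact Real.pow_div_factorial_le_exp _ (norm_nonneg _) j
  have hexp : ‖exp (w * z)‖ ≤ Real.exp (‖w‖ * M) := by
    rw [norm_exp, Real.exp_le_exp]
    exact (re_le_norm _).trans ((norm_mul _ _).trans_le (by gcongr))
  have hsplit : Real.exp ((‖α‖ + 2 * n) * (M + 1)) =
      Real.exp (‖α‖ * (M + 1)) * Real.exp (2 * (M + 1)) ^ n := by
    rw [← Real.exp_nat_mul, ← Real.exp_add]; ring_nf
  have hM : 0 ≤ M + 1 := by linarith [(norm_nonneg z).trans hz]
  calc ‖besselTerm α j n z‖ = ‖besselCoeff α n‖ * ‖w ^ j‖ * ‖exp (w * z)‖ := by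
        rw [besselTerm, norm_mul, norm_mul]
    _ ≤ ‖Gamma (α + 1)‖⁻¹ / n ! * (j ! * Real.exp ‖w‖) * Real.exp (‖w‖ * M) := by
        gcongr; exact norm_besselCoeff_le hα n
    _ = ‖Gamma (α + 1)‖⁻¹ / n ! * j ! * Real.exp (‖w‖ * (M + 1)) := by
        rw [_root_.mul_add_one, Real.exp_add]; ring
    _ ≤ ‖Gamma (α + 1)‖⁻¹ / n ! * j ! * Real.exp ((‖α‖ + 2 * n) * (M + 1)) := by gcongr
    _ = _ := by rw [hsplit]; ring

theorem summable_besselTerm_bound (α : ℂ) (j : ℕ) (M : ℝ) :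
    Summable fun n : ℕ =>
      ‖Gamma (α + 1)‖⁻¹ * j ! * Real.exp (‖α‖ * (M + 1)) * (Real.exp (2 * (M + 1)) ^ n / n !) :=
  (Real.summable_pow_div_factorial _).mul_left _

theorem summable_besselTerm (hα : 0 ≤ α.re) (j : ℕ) (z : ℂ) :
    Summable fun n => besselTerm α j n z :=
  .of_norm_bounded (summable_besselTerm_bound α j ‖z‖) fun n => norm_besselTerm_le hα j n le_rfl

theorem hasDerivAt_besselTerm (α : ℂ) (j n : ℕ) (z : ℂ) :
    HasDerivAt (besselTerm α j n) (besselTerm α (j + 1) n z) z := by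
  have := ((hasDerivAt_id' z).const_mul (α + 2 * n)).cexp.const_mul
    (besselCoeff α n * (α + 2 * n) ^ j)
  exact this.congr_deriv (by simp only [besselTerm]; ring)

theorem hasDerivAt_besselSeries (hα : 0 ≤ α.re) (j : ℕ) (z : ℂ) :
    HasDerivAt (besselSeries α j) (besselSeries α (j + 1) z) z := by
  have hz : z ∈ Metric.ball z 1 := Metric.mem_ball_self one_pos
  refine hasDerivAt_tsum_of_isPreconnected (summable_besselTerm_bound α (j + 1) (‖z‖ + 1))
    Metric.isOpen_ball (convex_ball z 1).isPreconnected
    (fun n y _ => hasDerivAt_besselTerm α j n y) (fun n y hy => norm_besselTerm_le hα _ n ?_) hz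
    (summable_besselTerm hα j z) hz
  have := norm_le_norm_add_norm_sub' y z
  rw [Metric.mem_ball, dist_eq_norm] at hy
  linarith

theorem besselCoeff_succ_mul (hα : 0 ≤ α.re) (n : ℕ) :
    besselCoeff α (n + 1) * ((n + 1) * (α + n + 1)) = -besselCoeff α n := by
  have hre : 0 < (α + n + 1).re := by simp; linarith
  have hne : α + n + 1 ≠ 0 := fun h => by simp [h] at hre
  have hΓ : Gamma (α + n + 1) ≠ 0 := Gamma_ne_zero_of_re_pos hre
  rw [besselCoeff, besselCoeff, Nat.cast_succ, ← add_assoc, Gamma_add_one _ hne,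
    Nat.factorial_succ]
  push_cast
  field_simp
  ring

/-- Bessel's equation in the variable `z = log (x / 2)`. -/
theorem besselSeries_two (hα : 0 ≤ α.re) (z : ℂ) :
    besselSeries α 2 z = (α ^ 2 - 4 * exp (2 * z)) * besselSeries α 0 z := by
  set f : ℕ → ℂ := fun n => besselTerm α 2 n z - α ^ 2 * besselTerm α 0 n z
  have hS₀ := (summable_besselTerm hα 0 z).hasSum
  have hf : HasSum f (besselSeries α 2 z - α ^ 2 * besselSeries α 0 z) :=
    (summable_besselTerm hα 2 z).hasSum.sub (hS₀.mul_left _)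
  have hshift : ∀ n, f (n + 1) = -4 * exp (2 * z) * besselTerm α 0 n z := fun n => by
    have hexp : exp ((α + 2 * (n + 1 : ℕ)) * z) = exp (2 * z) * exp ((α + 2 * n) * z) := by
      rw [← exp_add]; push_cast; ring_nf
    simp only [f, besselTerm, hexp]
    push_cast
    linear_combination (4 * exp (2 * z) * exp ((α + 2 * n) * z)) * besselCoeff_succ_mul hα n
  have hf' : HasSum f (-4 * exp (2 * z) * besselSeries α 0 z) := by
    refine (hasSum_nat_add_iff' 1).mp ?_
    have hf₀ : f 0 = 0 := by simp [f, besselTerm]; ring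
    simpa [hshift, hf₀, besselSeries] using hS₀.mul_left (-4 * exp (2 * z))
  linear_combination hf.unique hf'

theorem norm_besselJ_le_tsum (hα : 0 ≤ α.re) {x : ℝ} (hx : 0 < x) (hx₂ : x ≤ 2) :
    ‖besselJ α x‖ ≤ ∑' n, ‖besselCoeff α n‖ := by
  have hlog : Real.log (x / 2) ≤ 0 := Real.log_nonpos (by positivity) (by linarith)
  have hsum : Summable fun n => ‖besselCoeff α n‖ := by
    simpa [besselTerm] using (summable_besselTerm hα 0 0).norm
  rw [besselJ_eq_besselSeries]
  refine tsum_of_norm_bounded hsum.hasSum fun n => ?_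
  rw [besselTerm, pow_zero, mul_one, norm_mul, norm_exp]
  refine mul_le_of_le_one_right (norm_nonneg _) (Real.exp_le_one_iff.mpr ?_)
  simpa using mul_nonpos_of_nonneg_of_nonpos (by positivity : 0 ≤ α.re + 2 * n) hlog

end BesselSeries

/-- For `W'' = -(1 + q / x²) W` the energy `‖W‖² + ‖W'‖²` grows at relative rate at most
`|q| / x²`, so `(‖W‖² + ‖W'‖²) * exp (|q| / x)` is antitone. -/
theorem sq_norm_add_sq_norm_deriv_le {E : Type*} [NormedAddCommGroup E] [InnerProductSpace ℝ E]
    {W W' : ℝ → E} {q : ℝ}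
    (hW : ∀ x, 1 ≤ x → HasDerivAt W (W' x) x)
    (hW' : ∀ x, 1 ≤ x → HasDerivAt W' ((-(1 + q / x ^ 2)) • W x) x) {x : ℝ} (hx : 1 ≤ x) :
    ‖W x‖ ^ 2 + ‖W' x‖ ^ 2 ≤ (‖W 1‖ ^ 2 + ‖W' 1‖ ^ 2) * Real.exp |q| := by
  set En : ℝ → ℝ := fun y => ‖W y‖ ^ 2 + ‖W' y‖ ^ 2
  set Φ : ℝ → ℝ := fun y => En y * Real.exp (|q| * y⁻¹)
  have hΦ : ∀ y, 1 ≤ y → ∃ d, HasDerivAt Φ d y ∧ d ≤ 0 := by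
    intro y hy
    have hy₀ : 0 < y := by linarith
    set i := ⟪W y, W' y⟫
    have hEn : HasDerivAt En (-(q * (2 * i)) / y ^ 2) y :=
      ((hW y hy).norm_sq.add (hW' y hy).norm_sq).congr_deriv (by
        rw [real_inner_smul_right, real_inner_comm (W y)]
        field_simp
        ring)
    refine ⟨_, hEn.mul ((hasDerivAt_inv hy₀.ne').const_mul |q|).exp, ?_⟩
    have hi : |q * (2 * i)| ≤ |q| * En y := by
      have := abs_real_inner_le_norm (W y) (W' y)
      rw [abs_mul, abs_mul, abs_two]
      gcongr
      nlinarith [sq_nonneg (‖W y‖ - ‖W' y‖)]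
    have hd : -(q * (2 * i)) / y ^ 2 * Real.exp (|q| * y⁻¹) +
        En y * (Real.exp (|q| * y⁻¹) * (|q| * -(y ^ 2)⁻¹)) =
        Real.exp (|q| * y⁻¹) / y ^ 2 * (-(q * (2 * i)) - |q| * En y) := by
      field_simp
      ring
    rw [hd]
    exact mul_nonpos_of_nonneg_of_nonpos (by positivity) (by linarith [neg_le_abs (q * (2 * i))])
  have hanti : AntitoneOn Φ (Set.Ici 1) := by
    refine antitoneOn_of_deriv_nonpos (convex_Ici 1)
      (fun y hy => (hΦ y hy).choose_spec.1.continuousAt.continuousWithinAt) ?_ ?_ <;>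
    rw [interior_Ici] <;> intro y hy <;> obtain ⟨d, hd, hd₀⟩ := hΦ y (le_of_lt hy)
    · exact hd.differentiableAt.differentiableWithinAt
    · exact hd.deriv ▸ hd₀
  calc En x ≤ Φ x := le_mul_of_one_le_right (by positivity) (Real.one_le_exp (by positivity))
    _ ≤ Φ 1 := hanti Set.self_mem_Ici hx hx
    _ = _ := by simp [Φ, En]

section Liouville

theorem HasDerivAt.comp_log_half {F : ℂ → ℂ} {F' : ℂ} {x : ℝ} (hx : 0 < x)
    (hF : HasDerivAt F F' (Real.log (x / 2))) :
    HasDerivAt (fun y : ℝ => F (Real.log (y / 2))) (F' / x) x := by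
  have hlog : HasDerivAt (fun y : ℝ => Real.log (y / 2)) x⁻¹ x :=
    ((Real.hasDerivAt_log (by positivity)).comp x ((hasDerivAt_id x).div_const 2)).congr_deriv
      (by simp only [id]; field_simp)
  have h := hF.comp x hlog.ofReal_comp
  rwa [ofReal_inv, ← div_eq_mul_inv] at h

/-- `W(x) = √(x/2) · Y(log (x/2))`. -/
def liouvilleW (Y : ℂ → ℂ) (x : ℝ) : ℂ := exp (Real.log (x / 2) / 2) * Y (Real.log (x / 2))

variable {Y Y' Y'' : ℂ → ℂ} {β : ℝ}

/-- The substitution `W = liouvilleW Y` turns Bessel's equation `Y'' = (β - 4 e^{2z}) Y` into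
`W'' = -(1 + (1/4 - β)/x²) W`. -/
theorem hasDerivAt_liouvilleW (hY : ∀ z, HasDerivAt Y (Y' z) z)
    (hY' : ∀ z, HasDerivAt Y' (Y'' z) z) (hode : ∀ z, Y'' z = (β - 4 * exp (2 * z)) * Y z)
    {x : ℝ} (hx : 0 < x) :
    HasDerivAt (liouvilleW Y) (liouvilleW (fun z => Y z / 2 + Y' z) x / x) x ∧
      HasDerivAt (fun y => liouvilleW (fun z => Y z / 2 + Y' z) y / y)
        ((-(1 + (1 / 4 - β) / x ^ 2)) • liouvilleW Y x) x := by
  have hexp (z : ℂ) : HasDerivAt (fun z => exp (z / 2)) (exp (z / 2) / 2) z :=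
    ((hasDerivAt_id z).div_const 2).cexp.congr_deriv (by simp [div_eq_mul_inv])
  have hL : exp (2 * Real.log (x / 2)) = (x ^ 2 / 4 : ℝ) := by
    have h2L : 2 * (Real.log (x / 2) : ℂ) = (Real.log ((x / 2) ^ 2) : ℂ) := by
      rw [Real.log_pow]; push_cast; ring
    rw [h2L, ← ofReal_exp, Real.exp_log (by positivity)]
    ring_nf
  refine ⟨((hexp _).mul (hY _)).comp_log_half hx |>.congr_deriv ?_, ?_⟩
  · simp only [liouvilleW]; ring
  have h := (((hexp _).mul ((hY _).div_const 2 |>.add (hY' _))).comp_log_half hx).div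
    (hasDerivAt_id x).ofReal_comp (ofReal_ne_zero.mpr hx.ne')
  refine h.congr_deriv ?_
  simp only [liouvilleW, Pi.mul_apply, Pi.add_apply, id, ofReal_one, mul_one, real_smul]
  rw [hode, hL]
  have hx' : (x : ℂ) ≠ 0 := ofReal_ne_zero.mpr hx.ne'
  push_cast
  field_simp
  ring

theorem exists_mul_sq_norm_le_of_bessel_ode (hY : ∀ z, HasDerivAt Y (Y' z) z)
    (hY' : ∀ z, HasDerivAt Y' (Y'' z) z) (hode : ∀ z, Y'' z = (β - 4 * exp (2 * z)) * Y z) :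
    ∃ K, ∀ x : ℝ, 1 ≤ x → x * ‖Y (Real.log (x / 2))‖ ^ 2 ≤ K := by
  set W := liouvilleW Y
  set W' : ℝ → ℂ := fun y => liouvilleW (fun z => Y z / 2 + Y' z) y / y
  refine ⟨2 * ((‖W 1‖ ^ 2 + ‖W' 1‖ ^ 2) * Real.exp |1 / 4 - β|), fun x hx => ?_⟩
  have hE := sq_norm_add_sq_norm_deriv_le (W := W) (W' := W')
    (fun y hy => (hasDerivAt_liouvilleW hY hY' hode (by linarith)).1)
    (fun y hy => (hasDerivAt_liouvilleW hY hY' hode (by linarith)).2) hx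
  have hW : ‖W x‖ ^ 2 = x / 2 * ‖Y (Real.log (x / 2))‖ ^ 2 := by
    have hre : (Real.log (x / 2) / 2 : ℂ).re = Real.log (x / 2) / 2 := by simp
    simp only [W, liouvilleW]
    rw [norm_mul, mul_pow, norm_exp, hre, sq (Real.exp _), ← Real.exp_add, add_halves,
      Real.exp_log (by positivity)]
  nlinarith [sq_nonneg ‖W' x‖]

end Liouville

theorem exists_one_add_mul_sq_norm_hankel1_le (μ : ℝ) :
    ∃ K, ∀ x : ℝ, 0 < x → (1 + x) * ‖hankel1 (I * μ) x‖ ^ 2 ≤ K := by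
  set α : ℂ := I * μ
  have hα : 0 ≤ α.re := by simp [α]
  have hα' : 0 ≤ (-α).re := by simp [α]
  set a : ℂ := -exp (-(I * (Real.pi : ℂ) * α)) / (I * sin (α * (Real.pi : ℂ)))
  set b : ℂ := (I * sin (α * (Real.pi : ℂ)))⁻¹
  have hH (x : ℝ) : hankel1 α x = a * besselJ α x + b * besselJ (-α) x := by
    simp only [hankel1, a, b]; ring
  have hY (j : ℕ) (z : ℂ) := ((hasDerivAt_besselSeries hα j z).const_mul a).add
    ((hasDerivAt_besselSeries hα' j z).const_mul b)
  have hα₂ : α ^ 2 = (-μ ^ 2 : ℝ) := by simp [α, mul_pow]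
  obtain ⟨K, hK⟩ := exists_mul_sq_norm_le_of_bessel_ode (β := -μ ^ 2) (hY 0) (hY 1) fun z => by
    simp only [Pi.add_apply, besselSeries_two hα, besselSeries_two hα', neg_sq, hα₂]
    ring
  simp only [Pi.add_apply] at hK
  set B := ‖a‖ * ∑' n, ‖besselCoeff α n‖ + ‖b‖ * ∑' n, ‖besselCoeff (-α) n‖
  refine ⟨2 * (B ^ 2 + K), fun x hx => ?_⟩
  have hK₀ : 0 ≤ K := (by positivity : (0 : ℝ) ≤ 1 * _).trans (hK 1 le_rfl)
  rcases le_total x 1 with hx₁ | hx₁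
  · have hB : ‖hankel1 α x‖ ≤ B := by
      rw [hH]
      refine (norm_add_le _ _).trans ?_
      rw [norm_mul, norm_mul]
      exact add_le_add
        (mul_le_mul_of_nonneg_left (norm_besselJ_le_tsum hα hx (by linarith)) (norm_nonneg _))
        (mul_le_mul_of_nonneg_left (norm_besselJ_le_tsum hα' hx (by linarith)) (norm_nonneg _))
    nlinarith [norm_nonneg (hankel1 α x)]
  · have h := hK x hx₁
    rw [← besselJ_eq_besselSeries, ← besselJ_eq_besselSeries, ← hH] at h
    nlinarith [mul_le_mul_of_nonneg_right hx₁ (sq_nonneg ‖hankel1 α x‖), sq_nonneg B]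

theorem exists_norm_hankel1_le_rpow (μ : ℝ) :
    ∃ C, 0 < C ∧ ∀ x : ℝ, 0 < x → ‖hankel1 (I * μ) x‖ ≤ C * (1 + x) ^ (-(1 : ℝ) / 2) := by
  obtain ⟨K, hK⟩ := exists_one_add_mul_sq_norm_hankel1_le μ
  refine ⟨√K + 1, by positivity, fun x hx => ?_⟩
  have h1x : 0 < √(1 + x) := Real.sqrt_pos.mpr (by linarith)
  have hrpow : (1 + x) ^ (-(1 : ℝ) / 2) = (√(1 + x))⁻¹ := by
    rw [neg_div, Real.rpow_neg (by linarith), Real.sqrt_eq_rpow, one_div]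
  have hsq : ‖hankel1 (I * μ) x‖ * √(1 + x) ≤ √K := by
    rw [← Real.sqrt_sq (norm_nonneg _), ← Real.sqrt_mul (by positivity), mul_comm]
    exact Real.sqrt_le_sqrt (hK x hx)
  rw [hrpow, le_mul_inv_iff₀ h1x]
  nlinarith

theorem mode_function_bound_general (m R : ℝ) :
    ∃ C : ℝ, 0 < C ∧ ∀ t : ℝ, 1 ≤ t → ∀ k : ℝ, 0 < k →
      ‖modeV m R t k‖ ≤ C * t ^ ((3 : ℝ) / 2) * omegaK k ^ (-(1 : ℝ) / 2) := by
  obtain ⟨C, hC, hH⟩ := exists_norm_hankel1_le_rpow (modeMu m R)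
  refine ⟨C, hC, fun t ht k hk => ?_⟩
  have ht₀ : 0 < t := by linarith
  have hkt : k ≤ k * t := le_mul_of_one_le_right hk.le ht
  have hω : omegaK k ≤ 1 + k * t := Real.sqrt_le_iff.mpr ⟨by positivity, by nlinarith⟩
  have hdecay : ‖hankel1 (modeNu m R) (k * t)‖ ≤ C * omegaK k ^ (-(1 : ℝ) / 2) :=
    (hH _ (by positivity)).trans <| mul_le_mul_of_nonneg_left
      (Real.rpow_le_rpow_of_nonpos (Real.sqrt_pos.mpr (by positivity)) hω (by norm_num)) hC.le
  have hexp : Real.exp (-(modeMu m R * Real.pi / 2)) ≤ 1 := by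
    rw [Real.exp_le_one_iff, neg_nonpos]
    exact div_nonneg (mul_nonneg (Real.sqrt_nonneg _) Real.pi_pos.le) zero_le_two
  calc ‖modeV m R t k‖
      = Real.exp (-(modeMu m R * Real.pi / 2)) * t ^ ((3 : ℝ) / 2) *
          ‖hankel1 (modeNu m R) (k * t)‖ := by
        rw [modeV, norm_mul, norm_mul, norm_real, norm_real, Real.norm_of_nonneg (by positivity),
          Real.norm_of_nonneg (by positivity)]
    _ ≤ 1 * t ^ ((3 : ℝ) / 2) * (C * omegaK k ^ (-(1 : ℝ) / 2)) := by gcongr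
    _ = C * t ^ ((3 : ℝ) / 2) * omegaK k ^ (-(1 : ℝ) / 2) := by ring

/-- `|v(t,k)| ≤ C·t^{3/2}·ω(k)^{−1/2}` for `t ≥ 1`, `k > 0`. -/
theorem mode_function_bound (m R : ℝ) (hm : 0 < m) (hR : 0 < R) (hmR : 3 / 2 < m * R) :
    ∃ C : ℝ, 0 < C ∧ ∀ t : ℝ, 1 ≤ t → ∀ k : ℝ, 0 < k →
      ‖modeV m R t k‖ ≤ C * t ^ ((3 : ℝ) / 2) * omegaK k ^ (-(1 : ℝ) / 2) :=
  mode_function_bound_general m R
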